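/- arXiv:1608.05997 — 2 statements merged into one kernel-verified Lean document; each statement's English description precedes it below -/
import Mathlib

section
/- (Proposition 1, SINR saturation of frequency-domain combiners.) For every subcarrier index p ∈ {0,…,N−1}: (τ_av/N)² + Σ_{q=0, q≠p}^{N−1} ( |(1 − ρ̄(q−p)) / (N·(1 − e^{2πi(q−p)/N}))|² + |(ρ̄(q−p) − 1) / (N·(1 − e^{2πi(q−p)/N}))|² ) = (τ_av/N)² + Σ_{η=1}^{N−1} |1 − ρ̄(η)|² / (2N² sin²(πη/N)). Consequently, the asymptotic SINR of the conventional frequency-domain combiners in OFDM without CP, namely (1 − τ_av/N)² divided by the left-hand side above, equals (1 − τ_av/N)² / ( (τ_av/N)² + Σ_{η=1}^{N−1} |1 − ρ̄(η)|² / (2N² sin²(πη/N)) ), a value independent of p. -/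
open Finset

/-- Average delay spread `τ_av = ∑_{ℓ=0}^{L-1} ℓ·ρ(ℓ)`. -/
noncomputable def tauAv (L : ℕ) (ρ : ℕ → ℝ) : ℝ := ∑ ℓ ∈ range L, (ℓ : ℝ) * ρ ℓ

/-- DFT of the power delay profile: `ρ̄(η) = ∑_{ℓ=0}^{L-1} ρ(ℓ)·e^{-2πiℓη/N}`. -/
noncomputable def rhoBar (N L : ℕ) (ρ : ℕ → ℝ) (η : ℤ) : ℂ :=
  ∑ ℓ ∈ range L, (ρ ℓ : ℂ) *
    Complex.exp (-(2 * (Real.pi : ℂ) * Complex.I * (ℓ : ℂ) * (η : ℂ)) / (N : ℂ))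

/-- Interference power as written on the left-hand side (sum over subcarriers `q ≠ p`
of the squared magnitudes of the asymptotic ICI and ISI coefficients). -/
noncomputable def lhsIntf (N L : ℕ) (ρ : ℕ → ℝ) (p : ℕ) : ℝ :=
  ∑ q ∈ (range N).erase p,
    (‖(1 - rhoBar N L ρ ((q : ℤ) - (p : ℤ))) /
        ((N : ℂ) * (1 - Complex.exp (2 * (Real.pi : ℂ) * Complex.I *
          (((q : ℤ) - (p : ℤ) : ℤ) : ℂ) / (N : ℂ))))‖ ^ 2
    + ‖(rhoBar N L ρ ((q : ℤ) - (p : ℤ)) - 1) /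
        ((N : ℂ) * (1 - Complex.exp (2 * (Real.pi : ℂ) * Complex.I *
          (((q : ℤ) - (p : ℤ) : ℤ) : ℂ) / (N : ℂ))))‖ ^ 2)

/-- Interference power as written on the right-hand side (sum over `η = 1, …, N-1`). -/
noncomputable def rhsIntf (N L : ℕ) (ρ : ℕ → ℝ) : ℝ :=
  ∑ η ∈ Finset.Icc 1 (N - 1),
    ‖1 - rhoBar N L ρ (η : ℤ)‖ ^ 2 /
      (2 * (N : ℝ) ^ 2 * Real.sin (Real.pi * (η : ℝ) / (N : ℝ)) ^ 2)

/-! Both coefficients in the left-hand summand depend on `q - p` only modulo `N`, because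
`ρ̄` and `e^{2πiη/N}` are `N`-periodic in `η`; as `q` runs over the subcarriers other than `p`,
`(q - p) mod N` runs over `1, …, N - 1`. The two coefficients have the same modulus, and
`|1 - e^{iθ}|² = 4 sin²(θ/2)` turns each summand into `|1 - ρ̄(η)|² / (2N² sin²(πη/N))`. -/

open Complex
open scoped Real

noncomputable def interferenceTerm (N L : ℕ) (ρ : ℕ → ℝ) (η : ℤ) : ℝ :=
  ‖(1 - rhoBar N L ρ η) / (N * (1 - exp (2 * π * I * η / N)))‖ ^ 2
    + ‖(rhoBar N L ρ η - 1) / (N * (1 - exp (2 * π * I * η / N)))‖ ^ 2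

lemma lhsIntf_eq_sum_interferenceTerm (N L : ℕ) (ρ : ℕ → ℝ) (p : ℕ) :
    lhsIntf N L ρ p = ∑ q ∈ (range N).erase p, interferenceTerm N L ρ (q - p) :=
  rfl

lemma exp_two_pi_I_mul_div_periodic {N : ℕ} (hN : N ≠ 0) (k : ℤ) :
    Function.Periodic (fun η : ℤ => exp (2 * π * I * k * η / N)) N := by
  intro η
  have hshift : 2 * π * I * k * ((η + N : ℤ) : ℂ) / N
      = 2 * π * I * k * η / N + k * (2 * π * I) := by
    push_cast
    field_simp
  dsimp only
  rw [hshift, exp_add, exp_int_mul_two_pi_mul_I, mul_one]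

lemma rhoBar_periodic (L : ℕ) {N : ℕ} (hN : N ≠ 0) (ρ : ℕ → ℝ) :
    Function.Periodic (rhoBar N L ρ) N := by
  intro η
  refine sum_congr rfl fun ℓ _ => congrArg _ ?_
  have h := exp_two_pi_I_mul_div_periodic hN (-ℓ) η
  push_cast at h ⊢
  convert h using 3 <;> ring

lemma interferenceTerm_periodic (L : ℕ) {N : ℕ} (hN : N ≠ 0) (ρ : ℕ → ℝ) :
    Function.Periodic (interferenceTerm N L ρ) N := by
  intro η
  have h := exp_two_pi_I_mul_div_periodic hN 1 η
  simp only [Int.cast_one, mul_one] at h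
  simp only [interferenceTerm, rhoBar_periodic L hN ρ η, h]

lemma norm_one_sub_exp_two_pi_I_div_sq (x : ℝ) (N : ℕ) :
    ‖1 - exp (2 * π * I * x / N)‖ ^ 2 = 4 * Real.sin (π * x / N) ^ 2 := by
  rw [norm_sub_rev, show 2 * π * I * x / N = I * ↑(2 * π * x / N) by push_cast; ring,
    norm_exp_I_mul_ofReal_sub_one, Real.norm_eq_abs, sq_abs,
    show 2 * π * x / N / 2 = π * x / N by ring]
  ring

-- No range condition on `m`: where the sine vanishes, both sides are `0` by `x / 0 = 0`.
lemma interferenceTerm_natCast (N L : ℕ) (ρ : ℕ → ℝ) (m : ℕ) :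
    interferenceTerm N L ρ m = ‖1 - rhoBar N L ρ (m : ℤ)‖ ^ 2 /
      (2 * N ^ 2 * Real.sin (π * m / N) ^ 2) := by
  have hden := norm_one_sub_exp_two_pi_I_div_sq m N
  push_cast at hden
  simp only [interferenceTerm, norm_div, norm_mul, norm_natCast, div_pow, mul_pow,
    norm_sub_rev (rhoBar N L ρ m) 1, Int.cast_natCast, hden]
  ring

lemma Function.Periodic.sum_erase_range_sub {M : Type*} [AddCommMonoid M] {f : ℤ → M}
    {N p : ℕ} (hf : Function.Periodic f N) (hp : p < N) :
    ∑ q ∈ (range N).erase p, f (q - p) = ∑ m ∈ Icc 1 (N - 1), f m := by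
  refine sum_bij' (fun q _ => if p ≤ q then q - p else q + N - p)
    (fun m _ => if p + m < N then p + m else p + m - N) ?_ ?_ ?_ ?_ ?_
  all_goals
    intro q hq
    simp only [mem_erase, mem_range, mem_Icc] at hq ⊢
  all_goals try (split_ifs <;> omega)
  split_ifs with hpq
  · congr 1; omega
  · rw [show ((q + N - p : ℕ) : ℤ) = q - p + N by omega, hf]

theorem stmt0_general (N L : ℕ) (ρ : ℕ → ℝ) (p : ℕ) (hp : p < N) :
    ((tauAv L ρ / N) ^ 2 + lhsIntf N L ρ p
        = (tauAv L ρ / N) ^ 2 + rhsIntf N L ρ)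
    ∧ ((1 - tauAv L ρ / N) ^ 2 / ((tauAv L ρ / N) ^ 2 + lhsIntf N L ρ p)
        = (1 - tauAv L ρ / N) ^ 2 / ((tauAv L ρ / N) ^ 2 + rhsIntf N L ρ)) := by
  have hintf : lhsIntf N L ρ p = rhsIntf N L ρ := by
    rw [lhsIntf_eq_sum_interferenceTerm,
      (interferenceTerm_periodic L (Nat.ne_zero_of_lt hp) ρ).sum_erase_range_sub hp]
    exact sum_congr rfl fun m _ => interferenceTerm_natCast N L ρ m
  exact ⟨by rw [hintf], by rw [hintf]⟩

/-- Proposition 1 (SINR saturation of conventional frequency-domain combiners in OFDM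
without CP): the interference power expression is independent of the subcarrier `p`, and
the asymptotic SINR equals the stated closed form. -/
theorem stmt0 (N L : ℕ) (hN : 2 ≤ N) (hL1 : 1 ≤ L) (hLN : L ≤ N)
    (ρ : ℕ → ℝ) (hnn : ∀ ℓ, 0 ≤ ρ ℓ) (hsum : ∑ ℓ ∈ range L, ρ ℓ = 1)
    (p : ℕ) (hp : p < N) :
    ((tauAv L ρ / N) ^ 2 + lhsIntf N L ρ p
        = (tauAv L ρ / N) ^ 2 + rhsIntf N L ρ)
    ∧ ((1 - tauAv L ρ / N) ^ 2 / ((tauAv L ρ / N) ^ 2 + lhsIntf N L ρ p)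
        = (1 - tauAv L ρ / N) ^ 2 / ((tauAv L ρ / N) ^ 2 + rhsIntf N L ρ)) :=
  stmt0_general N L ρ p hp
end

section
/- (Equation (20), cross-user case: covariance of the time-reversal effective channel.) Suppose k ≠ j and the family of taps of user k, (h_{m,k}(t))_{m,t}, is independent of the family of taps of user j, (h_{m,j}(t))_{m,t}, with all fourth-order products of taps integrable. Then for all ℓ, ℓ' ∈ {−(L−1),…,L−1}: E[ g_{kj}(ℓ)·conj(g_{kj}(ℓ')) ] = ρ̃(ℓ) if ℓ = ℓ' and 0 otherwise, where ρ̃(i) = Σ_{t=0}^{L−1} ρ(t)·ρ(t−i). -/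
open Finset MeasureTheory ProbabilityTheory

/-- Time-reversal effective channel between users `k` and `j`:
`g_{kj}(ℓ) = (1/√M)·∑_{m=0}^{M-1} ∑_{t∈ℤ} h_{m,j}(t)·conj(h_{m,k}(t-ℓ))`
(the taps vanish outside `{0,…,L-1}`, so the sum over `t` reduces to `0 ≤ t ≤ L-1`). -/
noncomputable def gTR {Ω υ : Type*} (M L : ℕ) (h : ℕ → υ → ℤ → Ω → ℂ)
    (k j : υ) (ℓ : ℤ) (ω : Ω) : ℂ :=
  (1 / ((Real.sqrt M : ℝ) : ℂ)) * ∑ m ∈ range M, ∑ t ∈ Finset.Icc (0 : ℤ) ((L : ℤ) - 1),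
    h m j t ω * (starRingEnd ℂ) (h m k (t - ℓ) ω)

/-- PDP autocorrelation `ρ̃(i) = ∑_{t=0}^{L-1} ρ(t)·ρ(t-i)`. -/
noncomputable def rhoTilde (L : ℕ) (ρ : ℤ → ℝ) (i : ℤ) : ℝ :=
  ∑ t ∈ Finset.Icc (0 : ℤ) ((L : ℤ) - 1), ρ t * ρ (t - i)

/-!
Expanding both effective channels, `g_{kj}(ℓ)·conj(g_{kj}(ℓ'))` is `1/M` times a sum of terms
`(h_{m,j}(t)·conj h_{m',j}(t'))·conj(h_{m,k}(t-ℓ)·conj h_{m',k}(t'-ℓ'))`. The two factors are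
functions of the independent tap families of users `j` and `k`, so each expectation factors into
two covariances, which vanish unless `(m,t) = (m',t')` and `t - ℓ = t' - ℓ'`, i.e. unless in
addition `ℓ = ℓ'`. The surviving terms add up to `M·ρ̃(ℓ)`.
-/

theorem MeasureTheory.Integrable.conj {Ω : Type*} [MeasurableSpace Ω] {μ : Measure Ω}
    {f : Ω → ℂ} (hf : Integrable f μ) : Integrable (fun ω => starRingEnd ℂ (f ω)) μ :=
  (RCLike.conjLIE : ℂ ≃ₗᵢ[ℝ] ℂ).integrable_comp_iff.2 hf

section MulConj

variable {Ω ι : Type*} [MeasurableSpace Ω] {μ : Measure Ω} {X Y : Ω → ι → ℂ}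

theorem ProbabilityTheory.IndepFun.mul_conj (hXY : IndepFun X Y μ) (a b c d : ι) :
    IndepFun (fun ω => X ω a * starRingEnd ℂ (X ω b))
      (fun ω => starRingEnd ℂ (Y ω c * starRingEnd ℂ (Y ω d))) μ := by
  refine hXY.comp (φ := fun x => x a * starRingEnd ℂ (x b))
    (ψ := fun y => starRingEnd ℂ (y c * starRingEnd ℂ (y d))) ?_ ?_ <;> fun_prop

theorem ProbabilityTheory.IndepFun.integrable_mul_conj_mul_conj (hXY : IndepFun X Y μ)
    {a b c d : ι} (hX : Integrable (fun ω => X ω a * starRingEnd ℂ (X ω b)) μ)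
    (hY : Integrable (fun ω => Y ω c * starRingEnd ℂ (Y ω d)) μ) :
    Integrable (fun ω => X ω a * starRingEnd ℂ (X ω b) *
      starRingEnd ℂ (Y ω c * starRingEnd ℂ (Y ω d))) μ :=
  (hXY.mul_conj a b c d).integrable_mul hX hY.conj

theorem ProbabilityTheory.IndepFun.integral_mul_conj_mul_conj (hXY : IndepFun X Y μ)
    {a b c d : ι} (hX : Integrable (fun ω => X ω a * starRingEnd ℂ (X ω b)) μ)
    (hY : Integrable (fun ω => Y ω c * starRingEnd ℂ (Y ω d)) μ) :
    ∫ ω, X ω a * starRingEnd ℂ (X ω b) * starRingEnd ℂ (Y ω c * starRingEnd ℂ (Y ω d)) ∂μ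
      = (∫ ω, X ω a * starRingEnd ℂ (X ω b) ∂μ) *
          starRingEnd ℂ (∫ ω, Y ω c * starRingEnd ℂ (Y ω d) ∂μ) := by
  rw [(hXY.mul_conj a b c d).integral_fun_mul_eq_mul_integral hX.1 hY.conj.1, integral_conj]

end MulConj

noncomputable def tapSet (M L : ℕ) : Finset (ℕ × ℤ) := range M ×ˢ Icc 0 ((L : ℤ) - 1)

theorem mem_tapSet_fst_lt {M L : ℕ} {p : ℕ × ℤ} (hp : p ∈ tapSet M L) : p.1 < M :=
  mem_range.1 (mem_product.1 hp).1

section TimeReversal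

variable {Ω υ : Type*} (M L : ℕ) (h : ℕ → υ → ℤ → Ω → ℂ) (k j : υ)

def crossTerm (ℓ ℓ' : ℤ) (p q : ℕ × ℤ) (ω : Ω) : ℂ :=
  h p.1 j p.2 ω * starRingEnd ℂ (h q.1 j q.2 ω) *
    starRingEnd ℂ (h p.1 k (p.2 - ℓ) ω * starRingEnd ℂ (h q.1 k (q.2 - ℓ') ω))

theorem gTR_eq_sum_tapSet (ℓ : ℤ) (ω : Ω) :
    gTR M L h k j ℓ ω = (1 / ((Real.sqrt M : ℝ) : ℂ)) *
      ∑ p ∈ tapSet M L, h p.1 j p.2 ω * starRingEnd ℂ (h p.1 k (p.2 - ℓ) ω) := by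
  rw [gTR, tapSet, sum_product]

theorem gTR_mul_conj_gTR (ℓ ℓ' : ℤ) (ω : Ω) :
    gTR M L h k j ℓ ω * starRingEnd ℂ (gTR M L h k j ℓ' ω)
      = (M : ℂ)⁻¹ * ∑ p ∈ tapSet M L, ∑ q ∈ tapSet M L, crossTerm h k j ℓ ℓ' p q ω := by
  have hM : (1 / ((Real.sqrt M : ℝ) : ℂ)) * starRingEnd ℂ (1 / ((Real.sqrt M : ℝ) : ℂ))
      = (M : ℂ)⁻¹ := by
    rw [map_div₀, map_one, Complex.conj_ofReal, div_mul_div_comm, one_mul,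
      ← Complex.ofReal_mul, Real.mul_self_sqrt (Nat.cast_nonneg M), Complex.ofReal_natCast,
      one_div]
  simp only [gTR_eq_sum_tapSet, map_mul, map_sum]
  rw [mul_mul_mul_comm, hM, sum_mul_sum]
  congr 1
  refine sum_congr rfl fun p _ => sum_congr rfl fun q _ => ?_
  simp only [crossTerm, map_mul, Complex.conj_conj]
  ring

theorem sum_tapSet_mul_shift (ρ : ℤ → ℝ) (ℓ : ℤ) :
    ∑ p ∈ tapSet M L, ρ p.2 * ρ (p.2 - ℓ) = M * rhoTilde L ρ ℓ := by
  simp only [tapSet, sum_product, sum_const, card_range, nsmul_eq_mul, rhoTilde]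

variable [MeasurableSpace Ω] {μ : Measure Ω} {M}
  (hint : ∀ m u t m' u' t', m < M → m' < M →
    Integrable (fun ω => h m u t ω * (starRingEnd ℂ) (h m' u' t' ω)) μ)
  (hindep : IndepFun (fun ω => fun mt : ℕ × ℤ => h mt.1 k mt.2 ω)
    (fun ω => fun mt : ℕ × ℤ => h mt.1 j mt.2 ω) μ)
include hint hindep

theorem integrable_crossTerm (ℓ ℓ' : ℤ) {p q : ℕ × ℤ} (hp : p.1 < M) (hq : q.1 < M) :
    Integrable (crossTerm h k j ℓ ℓ' p q) μ :=
  hindep.symm.integrable_mul_conj_mul_conj (a := p) (b := q) (c := (p.1, p.2 - ℓ))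
    (d := (q.1, q.2 - ℓ')) (hint p.1 j p.2 q.1 j q.2 hp hq)
    (hint p.1 k (p.2 - ℓ) q.1 k (q.2 - ℓ') hp hq)

theorem integral_gTR_mul_conj_gTR (ℓ ℓ' : ℤ) :
    ∫ ω, gTR M L h k j ℓ ω * starRingEnd ℂ (gTR M L h k j ℓ' ω) ∂μ
      = (M : ℂ)⁻¹ * ∑ p ∈ tapSet M L, ∑ q ∈ tapSet M L, ∫ ω, crossTerm h k j ℓ ℓ' p q ω ∂μ := by
  have hterm : ∀ p ∈ tapSet M L, ∀ q ∈ tapSet M L, Integrable (crossTerm h k j ℓ ℓ' p q) μ :=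
    fun p hp q hq => integrable_crossTerm h k j hint hindep ℓ ℓ'
      (mem_tapSet_fst_lt hp) (mem_tapSet_fst_lt hq)
  simp_rw [gTR_mul_conj_gTR]
  rw [integral_const_mul, integral_finsetSum _ fun p hp => integrable_finsetSum _ (hterm p hp)]
  congr 1
  exact sum_congr rfl fun p hp => integral_finsetSum _ (hterm p hp)

theorem integral_crossTerm [DecidableEq υ] (ρ : ℤ → ℝ)
    (hcov : ∀ m u t m' u' t', m < M → m' < M →
      ∫ ω, h m u t ω * (starRingEnd ℂ) (h m' u' t' ω) ∂μ
        = if m = m' ∧ u = u' ∧ t = t' then ((ρ t : ℝ) : ℂ) else 0)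
    (ℓ ℓ' : ℤ) {p q : ℕ × ℤ} (hp : p.1 < M) (hq : q.1 < M) :
    ∫ ω, crossTerm h k j ℓ ℓ' p q ω ∂μ
      = if p = q ∧ ℓ = ℓ' then ((ρ p.2 * ρ (p.2 - ℓ) : ℝ) : ℂ) else 0 := by
  refine (hindep.symm.integral_mul_conj_mul_conj (a := p) (b := q) (c := (p.1, p.2 - ℓ))
    (d := (q.1, q.2 - ℓ')) (hint p.1 j p.2 q.1 j q.2 hp hq)
    (hint p.1 k (p.2 - ℓ) q.1 k (q.2 - ℓ') hp hq)).trans ?_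
  rw [hcov p.1 j p.2 q.1 j q.2 hp hq, hcov p.1 k (p.2 - ℓ) q.1 k (q.2 - ℓ') hp hq]
  obtain ⟨m, t⟩ := p
  obtain ⟨m', t'⟩ := q
  by_cases hmt : m = m' ∧ t = t'
  · obtain ⟨rfl, rfl⟩ := hmt
    by_cases hℓ : ℓ = ℓ' <;> simp [hℓ]
  · simp only [Prod.mk.injEq, true_and]
    rw [if_neg hmt, zero_mul, if_neg fun h => hmt h.1]

end TimeReversal

theorem stmt8_general {Ω υ : Type*} [MeasurableSpace Ω] (μ : Measure Ω) [DecidableEq υ]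
    (L : ℕ) (ρ : ℤ → ℝ) (M : ℕ) (hM : 1 ≤ M) (k j : υ) (h : ℕ → υ → ℤ → Ω → ℂ)
    (hint : ∀ m u t m' u' t', m < M → m' < M →
      Integrable (fun ω => h m u t ω * (starRingEnd ℂ) (h m' u' t' ω)) μ)
    (hcov : ∀ m u t m' u' t', m < M → m' < M →
      ∫ ω, h m u t ω * (starRingEnd ℂ) (h m' u' t' ω) ∂μ
        = if m = m' ∧ u = u' ∧ t = t' then ((ρ t : ℝ) : ℂ) else 0)
    (hindep : IndepFun (fun ω => fun mt : ℕ × ℤ => h mt.1 k mt.2 ω)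
      (fun ω => fun mt : ℕ × ℤ => h mt.1 j mt.2 ω) μ) :
    ∀ ℓ ∈ Finset.Icc (-(L : ℤ) + 1) ((L : ℤ) - 1),
      ∀ ℓ' ∈ Finset.Icc (-(L : ℤ) + 1) ((L : ℤ) - 1),
        ∫ ω, gTR M L h k j ℓ ω * (starRingEnd ℂ) (gTR M L h k j ℓ' ω) ∂μ
          = if ℓ = ℓ' then ((rhoTilde L ρ ℓ : ℝ) : ℂ) else 0 := by
  intro ℓ _ ℓ' _
  have hM0 : (M : ℂ) ≠ 0 := by exact_mod_cast (Nat.one_le_iff_ne_zero.1 hM)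
  rw [integral_gTR_mul_conj_gTR L h k j hint hindep]
  calc (M : ℂ)⁻¹ * ∑ p ∈ tapSet M L, ∑ q ∈ tapSet M L, ∫ ω, crossTerm h k j ℓ ℓ' p q ω ∂μ
      = (M : ℂ)⁻¹ * ∑ p ∈ tapSet M L, ∑ q ∈ tapSet M L,
          if p = q ∧ ℓ = ℓ' then ((ρ p.2 * ρ (p.2 - ℓ) : ℝ) : ℂ) else 0 := by
        congr 1
        exact sum_congr rfl fun p hp => sum_congr rfl fun q hq => integral_crossTerm h k j
          hint hindep ρ hcov ℓ ℓ' (mem_tapSet_fst_lt hp) (mem_tapSet_fst_lt hq)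
    _ = if ℓ = ℓ' then ((rhoTilde L ρ ℓ : ℝ) : ℂ) else 0 := by
        split_ifs with hℓ
        · subst hℓ
          simp only [and_true, sum_ite_eq, sum_ite_mem, inter_self]
          rw [← Complex.ofReal_sum, sum_tapSet_mul_shift, Complex.ofReal_mul,
            Complex.ofReal_natCast, inv_mul_cancel_left₀ hM0]
        · simp [hℓ]

/-- Equation (20), cross-user case (`k ≠ j`): covariance of the time-reversal
effective channel, `E[g_{kj}(ℓ)·conj(g_{kj}(ℓ'))] = ρ̃(ℓ)·𝟙[ℓ = ℓ']`. -/
theorem stmt8 {Ω υ : Type*} [MeasurableSpace Ω] (μ : Measure Ω) [IsProbabilityMeasure μ]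
    [DecidableEq υ]
    (N L : ℕ) (hL1 : 1 ≤ L) (hLN : L ≤ N)
    (ρ : ℤ → ℝ) (hρsupp : ∀ t : ℤ, (t < 0 ∨ (L : ℤ) ≤ t) → ρ t = 0)
    (hnn : ∀ t, 0 ≤ ρ t) (hsum : ∑ t ∈ Finset.Icc (0 : ℤ) ((L : ℤ) - 1), ρ t = 1)
    (M : ℕ) (hM : 1 ≤ M) (k j : υ) (hkj : k ≠ j)
    (h : ℕ → υ → ℤ → Ω → ℂ)
    (hsupp : ∀ m u (t : ℤ), (t < 0 ∨ (L : ℤ) ≤ t) → ∀ ω, h m u t ω = 0)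
    (hint : ∀ m u t m' u' t', m < M → m' < M →
      Integrable (fun ω => h m u t ω * (starRingEnd ℂ) (h m' u' t' ω)) μ)
    (hmean : ∀ m u t, m < M → ∫ ω, h m u t ω ∂μ = 0)
    (hcov : ∀ m u t m' u' t', m < M → m' < M →
      ∫ ω, h m u t ω * (starRingEnd ℂ) (h m' u' t' ω) ∂μ
        = if m = m' ∧ u = u' ∧ t = t' then ((ρ t : ℝ) : ℂ) else 0)
    (hindep : IndepFun (fun ω => fun mt : ℕ × ℤ => h mt.1 k mt.2 ω)
      (fun ω => fun mt : ℕ × ℤ => h mt.1 j mt.2 ω) μ)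
    (hint4 : ∀ m₁ u₁ t₁ m₂ u₂ t₂ m₃ u₃ t₃ m₄ u₄ t₄,
      Integrable (fun ω => h m₁ u₁ t₁ ω * (starRingEnd ℂ) (h m₂ u₂ t₂ ω) *
        h m₃ u₃ t₃ ω * (starRingEnd ℂ) (h m₄ u₄ t₄ ω)) μ) :
    ∀ ℓ ∈ Finset.Icc (-(L : ℤ) + 1) ((L : ℤ) - 1),
      ∀ ℓ' ∈ Finset.Icc (-(L : ℤ) + 1) ((L : ℤ) - 1),
        ∫ ω, gTR M L h k j ℓ ω * (starRingEnd ℂ) (gTR M L h k j ℓ' ω) ∂μ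
          = if ℓ = ℓ' then ((rhoTilde L ρ ℓ : ℝ) : ℂ) else 0 :=
  stmt8_general μ L ρ M hM k j h hint hcov hindep
end
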